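/- Let Y be a contre-lattice semistandard skyline filling on any basement, x its smallest entry value, and x_1 the cell containing the rightmost occurrence of x (first in column reading order). Then the filling Y' obtained by deleting the cell x_1 is again a contre-lattice semistandard skyline filling. -/

import Mathlib

open scoped Classical

/-! ## Words -/

def maxLetter (w : List ℕ) : ℕ := w.foldr max 0

def ContreUpTo (r : ℕ) (w : List ℕ) : Prop :=
  ∀ i j : ℕ, 1 < j → j ≤ r → (w.take i).count (j - 1) ≤ (w.take i).count j

def IsContreLattice (w : List ℕ) : Prop := ContreUpTo (maxLetter w) w

def IsRegularContreLattice (w : List ℕ) : Prop :=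
  IsContreLattice w ∧ (∀ x ∈ w, 1 ≤ x) ∧ 1 ∈ w

def IsLatticeWord (w : List ℕ) : Prop :=
  ∀ i j : ℕ, 1 ≤ j → (w.take i).count (j + 1) ≤ (w.take i).count j

/-! ## Skyline fillings -/

structure SkylineFilling (n : ℕ) where
  shape : Fin n → ℕ
  inner : Fin n → ℕ
  basement : Fin n → ℕ
  entry : Fin n → ℕ → ℕ

namespace SkylineFilling

variable {n : ℕ}

def Inversion (a b c : ℕ) : Prop := (b < a ∧ a ≤ c) ∨ (a ≤ c ∧ c < b)

def IsSSK (F : SkylineFilling n) : Prop :=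
  (∀ i, F.inner i ≤ F.shape i) ∧
  (∀ i : Fin n, ∀ k : ℕ, k ≤ F.inner i → F.entry i k = F.basement i) ∧
  (∀ i : Fin n, F.entry i 0 = F.basement i) ∧
  (∀ i : Fin n, ∀ k : ℕ, k + 1 ≤ F.shape i → F.entry i (k + 1) ≤ F.entry i k) ∧
  (∀ i j : Fin n, ∀ k : ℕ, i < j → F.shape j ≤ F.shape i → 1 ≤ k → k ≤ F.shape j →
      Inversion (F.entry i k) (F.entry j k) (F.entry i (k - 1))) ∧
  (∀ i j : Fin n, ∀ k : ℕ, i < j → F.shape i < F.shape j → k ≤ F.shape i → k + 1 ≤ F.shape j →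
      Inversion (F.entry j (k + 1)) (F.entry i k) (F.entry j k))

def EntriesIn (F : SkylineFilling n) (m : ℕ) : Prop :=
  ∀ i : Fin n, ∀ k : ℕ, F.inner i < k → k ≤ F.shape i →
    1 ≤ F.entry i k ∧ F.entry i k ≤ m

def Normalized (F : SkylineFilling n) : Prop :=
  ∀ i : Fin n, ∀ k : ℕ, F.shape i < k → F.entry i k = 0

def colList (F : SkylineFilling n) (k : ℕ) : List ℕ :=
  (List.finRange n).filterMap fun i =>
    if F.inner i < k ∧ k ≤ F.shape i then some (F.entry i k) else none

def width (F : SkylineFilling n) : ℕ := Finset.univ.sup F.shape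

def colWord (F : SkylineFilling n) : List ℕ :=
  ((List.range F.width).reverse.map fun k => F.colList (k + 1)).flatten

def looseWord (F : SkylineFilling n) : List ℕ :=
  ((List.range F.width).reverse.map fun k =>
    List.insertionSort (· ≥ ·) (F.colList (k + 1))).flatten

def colSet (F : SkylineFilling n) (k : ℕ) : Finset ℕ := (F.colList k).toFinset

def rowWord (F : SkylineFilling n) : List ℕ :=
  ((List.finRange n).reverse.map fun i =>
    (List.range (F.shape i - F.inner i)).map fun t => F.entry i (F.inner i + 1 + t)).flatten

def count (F : SkylineFilling n) (v : ℕ) : ℕ := F.rowWord.count v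

/-- The content of `F` is `lam*`, the reverse of the partition `lam` (which has `r` parts). -/
def ContentRev (F : SkylineFilling n) (lam : ℕ → ℕ) (r : ℕ) : Prop :=
  ∀ v : ℕ, F.count v = if 1 ≤ v ∧ v ≤ r then lam (r - v) else 0

end SkylineFilling

/-! ## Fillings of Ferrers shapes (CT and SSYT) -/

structure Filling (n : ℕ) where
  shape : Fin n → ℕ
  entry : Fin n → ℕ → ℕ

namespace Filling

variable {n : ℕ}

def IsCT (F : Filling n) (m : ℕ) : Prop :=
  (∀ i j : Fin n, i ≤ j → F.shape j ≤ F.shape i) ∧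
  (∀ i : Fin n, ∀ k : ℕ, 1 ≤ k → k + 1 ≤ F.shape i → F.entry i (k + 1) ≤ F.entry i k) ∧
  (∀ i j : Fin n, ∀ k : ℕ, i < j → 1 ≤ k → k ≤ F.shape j → F.entry j k < F.entry i k) ∧
  (∀ i : Fin n, ∀ k : ℕ, 1 ≤ k → k ≤ F.shape i → 1 ≤ F.entry i k ∧ F.entry i k ≤ m) ∧
  (∀ i : Fin n, ∀ k : ℕ, k = 0 ∨ F.shape i < k → F.entry i k = 0)

def IsSSYT (F : Filling n) (m : ℕ) : Prop :=
  (∀ i j : Fin n, i ≤ j → F.shape j ≤ F.shape i) ∧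
  (∀ i : Fin n, ∀ k : ℕ, 1 ≤ k → k + 1 ≤ F.shape i → F.entry i k ≤ F.entry i (k + 1)) ∧
  (∀ i j : Fin n, ∀ k : ℕ, i < j → 1 ≤ k → k ≤ F.shape j → F.entry i k < F.entry j k) ∧
  (∀ i : Fin n, ∀ k : ℕ, 1 ≤ k → k ≤ F.shape i → 1 ≤ F.entry i k ∧ F.entry i k ≤ m) ∧
  (∀ i : Fin n, ∀ k : ℕ, k = 0 ∨ F.shape i < k → F.entry i k = 0)

def word (F : Filling n) : List ℕ :=
  ((List.finRange n).map fun i =>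
    (List.range (F.shape i)).map fun t => F.entry i (t + 1)).flatten

def count (F : Filling n) (v : ℕ) : ℕ := F.word.count v

def colList (F : Filling n) (k : ℕ) : List ℕ :=
  (List.finRange n).filterMap fun i =>
    if 1 ≤ k ∧ k ≤ F.shape i then some (F.entry i k) else none

def ContentRev (F : Filling n) (lam : ℕ → ℕ) (r : ℕ) : Prop :=
  ∀ v : ℕ, F.count v = if 1 ≤ v ∧ v ≤ r then lam (r - v) else 0

end Filling

/-! ## Generating polynomials -/

noncomputable def schurPoly (n : ℕ) (lam : ℕ → ℕ) : MvPolynomial (Fin n) ℤ :=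
  ∑ μ ∈ Finset.Nat.antidiagonalTuple n (∑ i ∈ Finset.range n, lam i),
    (Nat.card {T : Filling n // T.shape = (fun i => lam i.val) ∧ T.IsSSYT n ∧
        ∀ v : Fin n, T.count (v.val + 1) = μ v}) •
      MvPolynomial.monomial (Finsupp.equivFunOnFinite.symm μ) (1 : ℤ)

noncomputable def atomPoly (n : ℕ) (γ : Fin n → ℕ) : MvPolynomial (Fin n) ℤ :=
  ∑ μ ∈ Finset.Nat.antidiagonalTuple n (∑ i, γ i),
    (Nat.card {F : SkylineFilling n // F.shape = γ ∧ F.inner = (fun _ => 0) ∧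
        F.basement = (fun i : Fin n => (i : ℕ) + 1) ∧ F.IsSSK ∧ F.EntriesIn n ∧ F.Normalized ∧
        ∀ v : Fin n, F.count (v.val + 1) = μ v}) •
      MvPolynomial.monomial (Finsupp.equivFunOnFinite.symm μ) (1 : ℤ)

noncomputable def qsPoly (n : ℕ) (α : List ℕ) : MvPolynomial (Fin n) ℤ :=
  ∑ γ ∈ (Finset.Nat.antidiagonalTuple n α.sum).filter
      (fun γ => (List.ofFn γ).filter (· != 0) = α),
    atomPoly n γ

noncomputable def charPoly (n : ℕ) (γ : Fin n → ℕ) : MvPolynomial (Fin n) ℤ :=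
  ∑ μ ∈ Finset.Nat.antidiagonalTuple n (∑ i, γ i),
    (Nat.card {F : SkylineFilling n // F.shape = (fun i => γ i.rev) ∧ F.inner = (fun _ => 0) ∧
        F.basement = (fun i : Fin n => n - (i : ℕ)) ∧ F.IsSSK ∧ F.EntriesIn n ∧ F.Normalized ∧
        ∀ v : Fin n, F.count (v.val + 1) = μ v}) •
      MvPolynomial.monomial (Finsupp.equivFunOnFinite.symm μ) (1 : ℤ)

noncomputable def lrsCount (n : ℕ) (γ δ : Fin n → ℕ) (lam : ℕ → ℕ) (r : ℕ) : ℕ :=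
  Nat.card {F : SkylineFilling n // F.shape = δ ∧ F.inner = γ ∧
    F.basement = (fun i : Fin n => 2 * n - (i : ℕ)) ∧ F.IsSSK ∧ F.EntriesIn n ∧ F.Normalized ∧
    IsRegularContreLattice F.colWord ∧ F.ContentRev lam r}

noncomputable def lrkCount (n : ℕ) (γ δ : Fin n → ℕ) (lam : ℕ → ℕ) (r : ℕ) : ℕ :=
  Nat.card {F : SkylineFilling n // F.shape = (fun i => δ i.rev) ∧
    F.inner = (fun i => γ i.rev) ∧
    F.basement = (fun i : Fin n => n + 1 + (i : ℕ)) ∧ F.IsSSK ∧ F.EntriesIn n ∧ F.Normalized ∧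
    IsRegularContreLattice F.colWord ∧ F.ContentRev lam r}

noncomputable def lrcCount (n : ℕ) (αl βl : List ℕ) (lam : ℕ → ℕ) (r : ℕ) : ℕ :=
  Nat.card (Quot (fun (L₁ L₂ : {F : SkylineFilling n //
      F.basement = (fun i : Fin n => 2 * n - (i : ℕ)) ∧ F.IsSSK ∧ F.EntriesIn n ∧ F.Normalized ∧
      IsRegularContreLattice F.colWord ∧ F.ContentRev lam r ∧
      (List.ofFn F.shape).filter (· != 0) = βl ∧
      (List.ofFn F.inner).filter (· != 0) = αl}) =>
    ∀ k : ℕ, L₁.1.colSet k = L₂.1.colSet k))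

def IsRemComp (a b : List ℕ) (k : ℕ) : Prop :=
  ∃ u v : List ℕ, b = u ++ k :: v ∧ k ∉ v ∧
    a = u ++ (if k = 1 then v else (k - 1) :: v)

/-!
Minimality of `x` forces its rightmost occurrence `(i, k)` to be the last cell of row `i`.
Deleting a minimal letter from a contre-lattice word keeps it contre-lattice: it only lowers the
number of `x`s, and no `x - 1` occurs. Shortening row `i` by one cell turns the type A triples
of rows `i < b` of equal length into type B triples, and the type B triples of rows `a < i` with
row `a` one cell shorter into type A triples. If such a new triple were not an inversion, the
old triples would force the entries of row `b` (resp. the shifted row `a`) to stay strictly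
below those of row `i` up to column `k`, contradicting the minimality of `x`.
-/

theorem List.exists_flatMap_eq_append_of_eqOn {ι α : Type*} {L : List ι} {a : ι} (hL : L.Nodup)
    (ha : a ∈ L) {f g : ι → List α} (hfg : ∀ b, b ≠ a → f b = g b) :
    ∃ s t, L.flatMap f = s ++ f a ++ t ∧ L.flatMap g = s ++ g a ++ t := by
  obtain ⟨l, r, rfl⟩ := List.append_of_mem ha
  have hl : a ∉ l := fun h => (List.nodup_append.1 hL).2.2 a h a List.mem_cons_self rfl
  have hr : a ∉ r := (List.nodup_cons.1 (List.nodup_append.1 hL).2.1).1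
  refine ⟨l.flatMap f, r.flatMap f, by simp, ?_⟩
  rw [List.flatMap_append, List.flatMap_cons,
    List.flatMap_congr (l := l) fun b hb => (hfg b (ne_of_mem_of_not_mem hb hl)).symm,
    List.flatMap_congr (l := r) fun b hb => (hfg b (ne_of_mem_of_not_mem hb hr)).symm]
  simp

theorem maxLetter_le_iff {w : List ℕ} {r : ℕ} : maxLetter w ≤ r ↔ ∀ a ∈ w, a ≤ r := by
  induction w with
  | nil => simp [maxLetter]
  | cons b w ih => simp [maxLetter, ← ih]

theorem maxLetter_mono {v w : List ℕ} (h : v ⊆ w) : maxLetter v ≤ maxLetter w :=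
  maxLetter_le_iff.2 fun a ha => maxLetter_le_iff.1 le_rfl a (h ha)

theorem ContreUpTo.mono {r r' : ℕ} {w : List ℕ} (hw : ContreUpTo r w) (h : r' ≤ r) :
    ContreUpTo r' w :=
  fun t j hj hjr => hw t j hj (hjr.trans h)

theorem ContreUpTo.delete_min {r x : ℕ} {u v : List ℕ} (h : ContreUpTo r (u ++ x :: v))
    (hx : ∀ y ∈ u ++ v, x ≤ y) : ContreUpTo r (u ++ v) := by
  intro t j hj hjr
  by_cases hjx : j = x
  · have : j - 1 ∉ (u ++ v).take t := fun hm => by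
      have := hx _ (List.take_subset _ _ hm)
      omega
    simp [List.count_eq_zero.2 this]
  rcases le_or_gt t u.length with ht | ht
  · have := h t j hj hjr
    rwa [List.take_append_of_le_length ht, ← List.take_append_of_le_length (l₂ := v) ht] at this
  · have hpre : (u ++ x :: v).take (t + 1) = u ++ x :: v.take (t - u.length) := by
      rw [List.take_append, List.take_of_length_le (by omega),
        show t + 1 - u.length = t - u.length + 1 by omega, List.take_succ_cons]
    have := h (t + 1) j hj hjr
    rw [hpre] at this
    rw [List.take_append, List.take_of_length_le ht.le]
    simp only [List.count_append, List.count_cons, beq_iff_eq] at this ⊢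
    split_ifs at this <;> omega

theorem IsContreLattice.delete_min {x : ℕ} {u v : List ℕ} (h : IsContreLattice (u ++ x :: v))
    (hx : ∀ y ∈ u ++ v, x ≤ y) : IsContreLattice (u ++ v) :=
  (ContreUpTo.delete_min h hx).mono (maxLetter_mono fun a => by simp; tauto)

namespace SkylineFilling

variable {n : ℕ}

theorem Inversion.of_chain {u v : ℕ → ℕ} {m K : ℕ} (hmK : m < K) (hu : u (m + 1) ≤ u m)
    (hv : ∀ t, m ≤ t → t < K → v (t + 1) ≤ v t)
    (hchain : ∀ t, m ≤ t → t < K → Inversion (u (t + 1)) (v (t + 1)) (u t))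
    (hend : v (m + 1) = v m ∨ u K ≤ v K) :
    Inversion (v (m + 1)) (u m) (v m) := by
  have hvm := hv m le_rfl hmK
  by_contra hnot
  have hle : v (m + 1) ≤ u m ∧ u m ≤ v m := by unfold Inversion at hnot; omega
  have hlt : ∀ t, m + 1 ≤ t → t ≤ K → v t < u t := by
    intro t hmt htK
    induction t, hmt using Nat.le_induction with
    | base => rcases hchain m le_rfl hmK with h | h <;> omega
    | succ t hmt ih =>
      have := ih (by omega)
      have := hv t (by omega) (by omega)
      rcases hchain t (by omega) htK with h | h <;> omega
  have := hlt (m + 1) le_rfl hmK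
  have := hlt K hmK le_rfl
  omega

def eraseLast (F : SkylineFilling n) (i : Fin n) : SkylineFilling n :=
  { F with shape := Function.update F.shape i (F.shape i - 1) }

def EntriesGe (F : SkylineFilling n) (x : ℕ) : Prop :=
  ∀ i k, F.inner i < k → k ≤ F.shape i → x ≤ F.entry i k

variable {F : SkylineFilling n} {i : Fin n}

@[simp] theorem eraseLast_inner : (F.eraseLast i).inner = F.inner := rfl

@[simp] theorem eraseLast_entry : (F.eraseLast i).entry = F.entry := rfl

@[simp] theorem eraseLast_shape_self : (F.eraseLast i).shape i = F.shape i - 1 :=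
  Function.update_self ..

theorem eraseLast_shape_of_ne {j : Fin n} (h : j ≠ i) : (F.eraseLast i).shape j = F.shape j :=
  Function.update_of_ne h ..

theorem eraseLast_shape_le (j : Fin n) : (F.eraseLast i).shape j ≤ F.shape j := by
  rcases eq_or_ne j i with rfl | h
  · simp
  · rw [eraseLast_shape_of_ne h]

theorem width_eraseLast_le : (F.eraseLast i).width ≤ F.width :=
  Finset.sup_mono_fun fun j _ => eraseLast_shape_le j

theorem colList_eraseLast_of_ne {k : ℕ} (hk : k ≠ F.shape i) :
    (F.eraseLast i).colList k = F.colList k := by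
  refine List.filterMap_congr fun j _ => ?_
  rcases eq_or_ne j i with rfl | h
  · exact if_congr (by simp only [eraseLast_inner, eraseLast_shape_self]; omega) rfl rfl
  · rw [eraseLast_shape_of_ne h, eraseLast_inner, eraseLast_entry]

theorem exists_colList_eraseLast (h : F.inner i < F.shape i) :
    ∃ s t, F.colList (F.shape i) = s ++ F.entry i (F.shape i) :: t ∧
      (F.eraseLast i).colList (F.shape i) = s ++ t := by
  simp only [colList, List.filterMap_eq_flatMap_toList]
  obtain ⟨s, t, hF, hF'⟩ := List.exists_flatMap_eq_append_of_eqOn (List.nodup_finRange n)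
    (List.mem_finRange i) (f := fun j => (if F.inner j < F.shape i ∧ F.shape i ≤ F.shape j
        then some (F.entry j (F.shape i)) else none).toList)
    (g := fun j => (if (F.eraseLast i).inner j < F.shape i ∧ F.shape i ≤ (F.eraseLast i).shape j
        then some ((F.eraseLast i).entry j (F.shape i)) else none).toList)
    fun j hj => by simp [eraseLast_shape_of_ne hj]
  refine ⟨s, t, ?_, ?_⟩
  · simpa [h] using hF
  · simpa [show ¬F.shape i ≤ F.shape i - 1 by omega] using hF'

theorem colList_eq_nil {k : ℕ} (hk : F.width < k) : F.colList k = [] :=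
  List.filterMap_eq_nil_iff.2 fun j _ => if_neg fun hj =>
    (hj.2.trans (Finset.le_sup (f := F.shape) (Finset.mem_univ j))).not_gt hk

theorem colWord_eq_flatMap {W : ℕ} (hW : F.width ≤ W) :
    F.colWord = (List.range W).reverse.flatMap fun k => F.colList (k + 1) := by
  obtain ⟨d, rfl⟩ := Nat.exists_eq_add_of_le hW
  rw [colWord, List.range_add, List.reverse_append, List.flatMap_append,
    List.flatMap_eq_nil_iff.2, List.nil_append, List.flatMap_def]
  intro k hk
  simp only [List.mem_reverse, List.mem_map, List.mem_range] at hk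
  obtain ⟨m, -, rfl⟩ := hk
  exact colList_eq_nil (by omega)

theorem exists_colWord_eraseLast (h : F.inner i < F.shape i) :
    ∃ u v, F.colWord = u ++ F.entry i (F.shape i) :: v ∧ (F.eraseLast i).colWord = u ++ v := by
  have hwidth : F.shape i - 1 < F.width :=
    lt_of_lt_of_le (by omega) (Finset.le_sup (f := F.shape) (Finset.mem_univ i))
  rw [colWord_eq_flatMap le_rfl, colWord_eq_flatMap width_eraseLast_le]
  obtain ⟨P, S, hF, hF'⟩ := List.exists_flatMap_eq_append_of_eqOn
    (List.nodup_reverse.2 List.nodup_range) (List.mem_reverse.2 (List.mem_range.2 hwidth))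
    (f := fun k => F.colList (k + 1)) (g := fun k => (F.eraseLast i).colList (k + 1))
    fun m hm => (colList_eraseLast_of_ne (by omega)).symm
  obtain ⟨s, t, hs, ht⟩ := exists_colList_eraseLast h
  have hk : F.shape i - 1 + 1 = F.shape i := by omega
  refine ⟨P ++ s, t ++ S, ?_, ?_⟩
  · simp [hF, hk, hs]
  · simp [hF', hk, ht]

theorem EntriesGe.le_of_mem_colWord {x y : ℕ} (hF : F.EntriesGe x) (hy : y ∈ F.colWord) :
    x ≤ y := by
  simp only [colWord, List.mem_flatten, List.mem_map] at hy
  obtain ⟨-, ⟨k, -, rfl⟩, hy⟩ := hy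
  obtain ⟨j, -, hj⟩ := List.mem_filterMap.1 hy
  split_ifs at hj with hc
  cases hj
  exact hF j (k + 1) hc.1 hc.2

theorem isContreLattice_colWord_eraseLast (hF : IsContreLattice F.colWord)
    (h : F.inner i < F.shape i) (hmin : F.EntriesGe (F.entry i (F.shape i))) :
    IsContreLattice (F.eraseLast i).colWord := by
  obtain ⟨u, v, hw, hw'⟩ := exists_colWord_eraseLast h
  rw [hw] at hF
  rw [hw']
  refine IsContreLattice.delete_min hF fun y hy => hmin.le_of_mem_colWord ?_
  rw [hw]
  simp only [List.mem_append, List.mem_cons] at hy ⊢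
  tauto

theorem IsSSK.inversion_typeB_of_shape_eq (hF : F.IsSSK)
    (hmin : F.EntriesGe (F.entry i (F.shape i))) {b : Fin n} (hib : i < b)
    (hsb : F.shape b = F.shape i) {m : ℕ} (hm : m < F.shape i) :
    Inversion (F.entry b (m + 1)) (F.entry i m) (F.entry b m) := by
  obtain ⟨-, hbase, -, hrow, hA, -⟩ := hF
  refine Inversion.of_chain hm (hrow i m hm) (fun t _ ht => hrow b t (by omega))
    (fun t _ ht => by simpa using hA i b (t + 1) hib hsb.le (by omega) (by omega)) ?_
  by_cases hb : F.inner b < F.shape i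
  · exact Or.inr (hmin b _ hb hsb.ge)
  · exact Or.inl ((hbase b _ (by omega)).trans (hbase b m (by omega)).symm)

theorem IsSSK.inversion_typeA_of_shape_succ_eq (hF : F.IsSSK)
    (hmin : F.EntriesGe (F.entry i (F.shape i))) {a : Fin n} (hai : a < i)
    (hsa : F.shape a + 1 = F.shape i) {t : ℕ} (ht1 : 1 ≤ t) (ht : t ≤ F.shape a) :
    Inversion (F.entry a t) (F.entry i t) (F.entry a (t - 1)) := by
  obtain ⟨-, hbase, -, hrow, -, hB⟩ := hF
  have hend :
      F.entry a t = F.entry a (t - 1) ∨ F.entry i (F.shape i) ≤ F.entry a (F.shape a) := by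
    by_cases ha : F.inner a < F.shape a
    · exact Or.inr (hmin a _ ha le_rfl)
    · exact Or.inl ((hbase a t (by omega)).trans (hbase a (t - 1) (by omega)).symm)
  -- row `a` is shifted one column to the right to line it up with row `i`
  simpa using Inversion.of_chain (u := F.entry i) (v := fun s => F.entry a (s - 1))
    (m := t) (K := F.shape i) (by omega) (hrow i t (by omega))
    (fun s _ hs => by
      simpa [Nat.sub_add_cancel (by omega : 1 ≤ s)] using hrow a (s - 1) (by omega))
    (fun s _ hs => by simpa using hB a i s hai (by omega) (by omega) hs)
    (by simpa [← hsa] using hend)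

theorem IsSSK.eraseLast (hF : F.IsSSK) (h : F.inner i < F.shape i)
    (hmin : F.EntriesGe (F.entry i (F.shape i))) : (F.eraseLast i).IsSSK := by
  obtain ⟨hin, hbase, hbase0, hrow, hA, hB⟩ := id hF
  refine ⟨fun j => ?_, hbase, hbase0, fun j m hm => hrow j m (hm.trans (eraseLast_shape_le j)),
    fun a b t hab hba ht1 ht => ?_, fun a b t hab hab' ht ht' => ?_⟩
  · rcases eq_or_ne j i with rfl | hj
    · simp only [eraseLast_inner, eraseLast_shape_self]; omega
    · rw [eraseLast_shape_of_ne hj]; exact hin j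
  · by_cases hle : F.shape b ≤ F.shape a
    · exact hA a b t hab hle ht1 (ht.trans (eraseLast_shape_le b))
    · obtain rfl : b = i := by
        by_contra hbi
        have := eraseLast_shape_le (F := F) (i := i) a
        rw [eraseLast_shape_of_ne hbi] at hba
        omega
      rw [eraseLast_shape_self, eraseLast_shape_of_ne hab.ne] at hba
      rw [eraseLast_shape_self] at ht
      exact hF.inversion_typeA_of_shape_succ_eq hmin hab (by omega) ht1 (by omega)
  · by_cases hlt : F.shape a < F.shape b
    · exact hB a b t hab hlt (ht.trans (eraseLast_shape_le a)) (ht'.trans (eraseLast_shape_le b))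
    · obtain rfl : a = i := by
        by_contra hai
        have := eraseLast_shape_le (F := F) (i := i) b
        rw [eraseLast_shape_of_ne hai] at hab'
        omega
      rw [eraseLast_shape_self, eraseLast_shape_of_ne hab.ne'] at hab'
      rw [eraseLast_shape_self] at ht
      exact hF.inversion_typeB_of_shape_eq hmin hab (by omega) (by omega)

end SkylineFilling

theorem stmt6 (n : ℕ) (F : SkylineFilling n) (hssk : F.IsSSK)
    (hcl : IsContreLattice F.colWord)
    (x : ℕ) (i : Fin n) (k : ℕ)
    (hcell : F.inner i < k ∧ k ≤ F.shape i) (hval : F.entry i k = x)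
    (hmin : ∀ (i' : Fin n) (k' : ℕ), F.inner i' < k' → k' ≤ F.shape i' → x ≤ F.entry i' k')
    (hfirst : ∀ (i' : Fin n) (k' : ℕ), F.inner i' < k' → k' ≤ F.shape i' →
      F.entry i' k' = x → (i', k') ≠ (i, k) → k' < k ∨ (k' = k ∧ i < i')) :
    SkylineFilling.IsSSK
      { shape := Function.update F.shape i (F.shape i - 1), inner := F.inner,
        basement := F.basement, entry := F.entry } ∧
    IsContreLattice
      (SkylineFilling.colWord
        { shape := Function.update F.shape i (F.shape i - 1), inner := F.inner,
          basement := F.basement, entry := F.entry }) := by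
  obtain ⟨hinner, hk⟩ := hcell
  obtain ⟨-, -, -, hrow, -⟩ := id hssk
  have hlast : k = F.shape i := by
    by_contra hne
    have hnext : F.entry i (k + 1) = x :=
      le_antisymm (hval ▸ hrow i k (by omega)) (hmin i (k + 1) (by omega) (by omega))
    rcases hfirst i (k + 1) (by omega) (by omega) hnext (by simp) with h | ⟨h, -⟩ <;> omega
  subst hlast hval
  exact ⟨hssk.eraseLast hinner hmin,
    SkylineFilling.isContreLattice_colWord_eraseLast hcl hinner hmin⟩
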